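/- arXiv:2301.03186 — 2 statements merged into one kernel-verified Lean document; each statement's English description precedes it below -/
import Mathlib

section
/- Fix a real L with 0 < L < 1 and reals y_0, y_1 with log(1/L − 1) < y_0 < y_1, and fix any y > y_0. Let Y_1, …, Y_n be reals with y_0 ≤ Y_i ≤ y_1 for all i. Then Σ_{i=1}^n log(1 + L·(e^{Y_i} − 1)) ≤ n·(a_0·m_2 + b_0·m_1 + c_0), where a_0, b_0, c_0 are the quadratic coefficients determined by L, y and y_0. (This is the upper bound of Theorem 3.) -/
/-!
Write `G t = 1 + L (eᵗ - 1)` and `q t = a₀ t² + b₀ t + c₀`. The coefficients are chosen so that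
`q` agrees with `log G` at `y₀` and at `y` and has the same slope at `y`. The second derivative
of `log G` is `k u / (k + u)²` with `k = 1 - L`, `u = L eᵗ`, which decreases once `u ≥ k`, i.e. for
`t ≥ log (1/L - 1)`. So `h = log G - q` has `h y₀ = h y = h' y = 0` and a concave derivative on
`[y₀, ∞)`. Rolle gives a zero `ξ ∈ (y₀, y)` of `h'`, and concavity then forces `h' ≤ 0`, `h' ≥ 0`,
`h' ≤ 0` on `[y₀, ξ]`, `[ξ, y]`, `[y, ∞)`; hence `h ≤ 0` on `[y₀, ∞)`.
-/

open Real Set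

section Calculus

variable {h h' h'' : ℝ → ℝ} {y₀ y : ℝ}

theorem nonpos_of_antitoneOn_deriv2 (hy : y₀ < y) (hh : ∀ t, HasDerivAt h (h' t) t)
    (hh' : ∀ t, HasDerivAt h' (h'' t) t) (hanti : AntitoneOn h'' (Ici y₀))
    (h_y₀ : h y₀ = 0) (h_y : h y = 0) (h'_y : h' y = 0) {t : ℝ} (ht : y₀ ≤ t) : h t ≤ 0 := by
  have hderiv : deriv h = h' := funext fun t => (hh t).deriv
  have hderiv' : deriv h' = h'' := funext fun t => (hh' t).deriv
  have hcont : Continuous h := continuous_iff_continuousAt.2 fun t => (hh t).continuousAt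
  have hdiff : Differentiable ℝ h := fun t => (hh t).differentiableAt
  have hconc : ConcaveOn ℝ (Ici y₀) h' := by
    refine AntitoneOn.concaveOn_of_deriv (convex_Ici y₀)
      (fun t _ => (hh' t).continuousAt.continuousWithinAt)
      (fun t _ => (hh' t).differentiableAt.differentiableWithinAt) ?_
    rw [hderiv', interior_Ici]
    exact hanti.mono Ioi_subset_Ici_self
  obtain ⟨ξ, ⟨hy₀ξ, hξy⟩, h'_ξ⟩ := exists_hasDerivAt_eq_zero hy hcont.continuousOn
    (h_y₀.trans h_y.symm) fun t _ => hh t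
  have hξ : ξ ∈ Ici y₀ := hy₀ξ.le
  have hy' : y ∈ Ici y₀ := hy.le
  have h_anti_left : AntitoneOn h (Icc y₀ ξ) := by
    refine antitoneOn_of_deriv_nonpos (convex_Icc y₀ ξ) hcont.continuousOn
      hdiff.differentiableOn fun s hs => ?_
    rw [interior_Icc] at hs
    rw [hderiv, ← h'_ξ]
    exact hconc.left_le_of_le_right'' hs.1.le hy' hs.2.le hξy (h'_ξ.trans h'_y.symm).le
  have h_mono_mid : MonotoneOn h (Icc ξ y) := by
    refine monotoneOn_of_deriv_nonneg (convex_Icc ξ y) hcont.continuousOn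
      hdiff.differentiableOn fun s hs => ?_
    rw [interior_Icc] at hs
    have := hconc.ge_on_segment hξ hy' (segment_eq_Icc hξy.le ▸ Ioo_subset_Icc_self hs)
    rwa [h'_ξ, h'_y, min_self, ← hderiv] at this
  have h_anti_right : AntitoneOn h (Ici y) := by
    refine antitoneOn_of_deriv_nonpos (convex_Ici y) hcont.continuousOn
      hdiff.differentiableOn fun s hs => ?_
    rw [interior_Ici] at hs
    rw [hderiv, ← h'_y]
    exact hconc.right_le_of_le_left'' hξ (hy.trans hs).le hξy hs.le (h'_y.trans h'_ξ.symm).le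
  rcases le_total t ξ with htξ | hξt
  · exact (h_anti_left ⟨le_rfl, hξ⟩ ⟨ht, htξ⟩ ht).trans h_y₀.le
  rcases le_total t y with hty | hyt
  · exact (h_mono_mid ⟨hξt, hty⟩ ⟨hξy.le, le_rfl⟩ hty).trans h_y.le
  · exact (h_anti_right self_mem_Ici hyt hyt).trans h_y.le

end Calculus

theorem le_quadratic_of_antitoneOn_deriv2 {g g' g'' : ℝ → ℝ} {y₀ y a b c : ℝ} (hy : y₀ < y)
    (hg : ∀ t, HasDerivAt g (g' t) t) (hg' : ∀ t, HasDerivAt g' (g'' t) t)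
    (hanti : AntitoneOn g'' (Ici y₀)) (hq_y₀ : a * y₀ ^ 2 + b * y₀ + c = g y₀)
    (hq_y : a * y ^ 2 + b * y + c = g y) (hq'_y : 2 * a * y + b = g' y) {t : ℝ} (ht : y₀ ≤ t) :
    g t ≤ a * t ^ 2 + b * t + c := by
  have hq : ∀ t : ℝ, HasDerivAt (fun t => a * t ^ 2 + b * t + c) (2 * a * t + b) t := fun t => by
    simpa [mul_comm, mul_left_comm] using
      (((hasDerivAt_pow 2 t).const_mul a).add ((hasDerivAt_id t).const_mul b)).add_const c
  have hq' : ∀ t : ℝ, HasDerivAt (fun t => 2 * a * t + b) (2 * a) t := fun t => by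
    simpa using ((hasDerivAt_id t).const_mul (2 * a)).add_const b
  have := nonpos_of_antitoneOn_deriv2 (h := fun t => g t - (a * t ^ 2 + b * t + c))
    (h' := fun t => g' t - (2 * a * t + b)) (h'' := fun t => g'' t - 2 * a) hy
    (fun t => (hg t).sub (hq t)) (fun t => (hg' t).sub (hq' t))
    (fun s hs t ht hst => sub_le_sub_right (hanti hs ht hst) _)
    (by simp [hq_y₀]) (by simp [hq_y]) (by simp [hq'_y]) ht
  exact sub_nonpos.1 this

theorem quadratic_coeffs_interpolate {y₀ y A₀ A s a b c : ℝ} (hy : y₀ ≠ y)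
    (ha : a = (1 / (y - y₀)) * ((A₀ - A) / (y - y₀) + s)) (hb : b = s - 2 * a * y)
    (hc : c = A₀ - a * y₀ ^ 2 - b * y₀) :
    a * y₀ ^ 2 + b * y₀ + c = A₀ ∧ a * y ^ 2 + b * y + c = A ∧ 2 * a * y + b = s := by
  have hd : y - y₀ ≠ 0 := sub_ne_zero.2 hy.symm
  refine ⟨by rw [hc]; ring, ?_, by rw [hb]; ring⟩
  have : a * (y - y₀) ^ 2 = A₀ - A + s * (y - y₀) := by
    rw [ha]; field_simp
  rw [hc, hb]
  linear_combination -this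

theorem one_add_mul_exp_sub_one_pos {L : ℝ} (hL0 : 0 < L) (hL1 : L ≤ 1) (t : ℝ) :
    0 < 1 + L * (exp t - 1) := by
  nlinarith [mul_pos hL0 (exp_pos t)]

theorem one_sub_le_mul_exp {L t : ℝ} (hL : 0 < L) (ht : log (1 / L - 1) ≤ t) :
    1 - L ≤ L * exp t := by
  have : 1 / L - 1 ≤ exp t := by
    rcases le_or_gt (1 / L - 1) 0 with hle | hpos
    · exact hle.trans (exp_pos t).le
    · exact (log_le_iff_le_exp hpos).1 ht
  calc 1 - L = L * (1 / L - 1) := by field_simp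
    _ ≤ L * exp t := mul_le_mul_of_nonneg_left this hL.le

theorem antitoneOn_mul_div_add_sq {k : ℝ} (hk : 0 < k) :
    AntitoneOn (fun u => k * u / (k + u) ^ 2) (Ici k) := by
  intro u hu v hv huv
  simp only [mem_Ici] at hu hv
  have huv' : k ^ 2 ≤ u * v := by nlinarith
  rw [div_le_div_iff₀ (by nlinarith) (by nlinarith)]
  nlinarith [mul_nonneg (mul_nonneg hk.le (sub_nonneg.2 huv)) (sub_nonneg.2 huv')]

section Leveraged

variable {L : ℝ}

theorem hasDerivAt_log_one_add_mul_exp_sub_one {t : ℝ} (hG : 1 + L * (exp t - 1) ≠ 0) :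
    HasDerivAt (fun t => log (1 + L * (exp t - 1))) (L * exp t / (1 + L * (exp t - 1))) t :=
  ((((hasDerivAt_exp t).sub_const 1).const_mul L).const_add 1).log hG

theorem hasDerivAt_mul_exp_div_one_add_mul_exp_sub_one {t : ℝ} (hG : 1 + L * (exp t - 1) ≠ 0) :
    HasDerivAt (fun t => L * exp t / (1 + L * (exp t - 1)))
      ((1 - L) * (L * exp t) / (1 - L + L * exp t) ^ 2) t := by
  refine (((hasDerivAt_exp t).const_mul L).div
    ((((hasDerivAt_exp t).sub_const 1).const_mul L).const_add 1) hG).congr_deriv ?_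
  ring

theorem antitoneOn_deriv2_log_one_add_mul_exp_sub_one (hL0 : 0 < L) (hL1 : L < 1) :
    AntitoneOn (fun t => (1 - L) * (L * exp t) / (1 - L + L * exp t) ^ 2)
      (Ici (log (1 / L - 1))) := by
  intro s hs t ht hst
  have hmem : ∀ {r}, r ∈ Ici (log (1 / L - 1)) → L * exp r ∈ Ici (1 - L) :=
    fun hr => one_sub_le_mul_exp hL0 hr
  exact antitoneOn_mul_div_add_sq (sub_pos.2 hL1) (hmem hs) (hmem ht)
    (mul_le_mul_of_nonneg_left (exp_le_exp.2 hst) hL0.le)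

theorem log_one_add_mul_exp_sub_one_le_quadratic (hL0 : 0 < L) (hL1 : L < 1) {y₀ y a b c : ℝ}
    (h0 : log (1 / L - 1) ≤ y₀) (hy : y₀ < y)
    (ha : a = (1 / (y - y₀)) *
      (log ((1 + L * (exp y₀ - 1)) / (1 + L * (exp y - 1))) / (y - y₀)
        + L * exp y / (1 + L * (exp y - 1))))
    (hb : b = L * exp y / (1 + L * (exp y - 1)) - 2 * a * y)
    (hc : c = log (1 + L * (exp y₀ - 1)) - a * y₀ ^ 2 - b * y₀) {t : ℝ} (ht : y₀ ≤ t) :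
    log (1 + L * (exp t - 1)) ≤ a * t ^ 2 + b * t + c := by
  have hG : ∀ t, 1 + L * (exp t - 1) ≠ 0 := fun t => (one_add_mul_exp_sub_one_pos hL0 hL1.le t).ne'
  rw [log_div (hG y₀) (hG y)] at ha
  obtain ⟨hq_y₀, hq_y, hq'_y⟩ := quadratic_coeffs_interpolate hy.ne ha hb hc
  exact le_quadratic_of_antitoneOn_deriv2 hy
    (fun t => hasDerivAt_log_one_add_mul_exp_sub_one (hG t))
    (fun t => hasDerivAt_mul_exp_div_one_add_mul_exp_sub_one (hG t))
    ((antitoneOn_deriv2_log_one_add_mul_exp_sub_one hL0 hL1).mono (Ici_subset_Ici.2 h0))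
    hq_y₀ hq_y hq'_y ht

end Leveraged

theorem natCast_mul_one_div_mul_sum {n : ℕ} (f : Fin n → ℝ) :
    (n : ℝ) * ((1 / n) * ∑ i, f i) = ∑ i, f i := by
  rcases n.eq_zero_or_pos with rfl | hn
  · simp
  · field_simp

theorem stmt_5_general (L y0 y1 y : ℝ) (hL0 : 0 < L) (hL1 : L < 1)
    (h0 : Real.log (1 / L - 1) < y0) (hy : y0 < y)
    (n : ℕ) (Y : Fin n → ℝ) (hY : ∀ i, y0 ≤ Y i ∧ Y i ≤ y1)
    (a b c m1 m2 : ℝ)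
    (ha : a = (1 / (y - y0)) *
      (Real.log ((1 + L * (Real.exp y0 - 1)) / (1 + L * (Real.exp y - 1))) / (y - y0)
        + L * Real.exp y / (1 + L * (Real.exp y - 1))))
    (hb : b = L * Real.exp y / (1 + L * (Real.exp y - 1)) - 2 * a * y)
    (hc : c = Real.log (1 + L * (Real.exp y0 - 1)) - a * y0 ^ 2 - b * y0)
    (hm1 : m1 = (1 / (n : ℝ)) * ∑ i, Y i)
    (hm2 : m2 = (1 / (n : ℝ)) * ∑ i, (Y i) ^ 2) :
    ∑ i, Real.log (1 + L * (Real.exp (Y i) - 1)) ≤ (n : ℝ) * (a * m2 + b * m1 + c) := by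
  calc ∑ i, log (1 + L * (exp (Y i) - 1)) ≤ ∑ i, (a * Y i ^ 2 + b * Y i + c) :=
        Finset.sum_le_sum fun i _ =>
          log_one_add_mul_exp_sub_one_le_quadratic hL0 hL1 h0.le hy ha hb hc (hY i).1
    _ = a * ∑ i, Y i ^ 2 + b * ∑ i, Y i + n * c := by
        simp [Finset.sum_add_distrib, Finset.mul_sum]
    _ = n * (a * m2 + b * m1 + c) := by
        rw [hm1, hm2]
        linear_combination (-a) * natCast_mul_one_div_mul_sum (fun i => Y i ^ 2)
          - b * natCast_mul_one_div_mul_sum Y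

theorem stmt_5 (L y0 y1 y : ℝ) (hL0 : 0 < L) (hL1 : L < 1)
    (h0 : Real.log (1 / L - 1) < y0) (h01 : y0 < y1) (hy : y0 < y)
    (n : ℕ) (Y : Fin n → ℝ) (hY : ∀ i, y0 ≤ Y i ∧ Y i ≤ y1)
    (a b c m1 m2 : ℝ)
    (ha : a = (1 / (y - y0)) *
      (Real.log ((1 + L * (Real.exp y0 - 1)) / (1 + L * (Real.exp y - 1))) / (y - y0)
        + L * Real.exp y / (1 + L * (Real.exp y - 1))))
    (hb : b = L * Real.exp y / (1 + L * (Real.exp y - 1)) - 2 * a * y)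
    (hc : c = Real.log (1 + L * (Real.exp y0 - 1)) - a * y0 ^ 2 - b * y0)
    (hm1 : m1 = (1 / (n : ℝ)) * ∑ i, Y i)
    (hm2 : m2 = (1 / (n : ℝ)) * ∑ i, (Y i) ^ 2) :
    ∑ i, Real.log (1 + L * (Real.exp (Y i) - 1)) ≤ (n : ℝ) * (a * m2 + b * m1 + c) :=
  stmt_5_general L y0 y1 y hL0 hL1 h0 hy n Y hY a b c m1 m2 ha hb hc hm1 hm2
end

section
/- Fix a real L < 0. For every real y with y < log(1 − 1/L), we have log(1 + L·(e^y − 1)) ≤ L·y. Consequently, if Y_1, …, Y_n all satisfy Y_i < log(1 − 1/L), then Σ_{i=1}^n log(1 + L·(e^{Y_i} − 1)) ≤ L·Σ_{i=1}^n Y_i. -/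
open Real Finset

/-! Since `log x ≤ x - 1` and `y ≤ exp y - 1`, for `L ≤ 0` we get
`log (1 + L (exp y - 1)) ≤ L (exp y - 1) ≤ L y` as soon as the argument of the logarithm is
positive, which is what `y < log (1 - 1 / L)` guarantees. Summing gives the bound over `n` days. -/

lemma one_add_mul_exp_sub_one_pos_s14 {L y : ℝ} (hL : L < 0) (hy : y < log (1 - 1 / L)) :
    0 < 1 + L * (exp y - 1) := by
  have hbound : 0 < 1 - 1 / L := by linarith [one_div_neg.2 hL]
  have hexp : exp y - 1 < -1 / L := by
    linarith [(lt_log_iff_exp_lt hbound).1 hy, neg_div L 1]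
  have hmul : L * (-1 / L) = -1 := by field_simp [hL.ne]
  linarith [mul_lt_mul_of_neg_left hexp hL]

lemma log_one_add_mul_exp_sub_one_le {L y : ℝ} (hL : L ≤ 0) (hpos : 0 < 1 + L * (exp y - 1)) :
    log (1 + L * (exp y - 1)) ≤ L * y :=
  calc log (1 + L * (exp y - 1))
      ≤ L * (exp y - 1) := by linarith [log_le_sub_one_of_pos hpos]
    _ ≤ L * y := mul_le_mul_of_nonpos_left (by linarith [add_one_le_exp y]) hL

theorem stmt_14 (L : ℝ) (hL : L < 0) :
    (∀ y : ℝ, y < Real.log (1 - 1 / L) →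
      Real.log (1 + L * (Real.exp y - 1)) ≤ L * y) ∧
    (∀ (n : ℕ) (Y : Fin n → ℝ), (∀ i, Y i < Real.log (1 - 1 / L)) →
      ∑ i, Real.log (1 + L * (Real.exp (Y i) - 1)) ≤ L * ∑ i, Y i) := by
  have daily (y : ℝ) (hy : y < log (1 - 1 / L)) : log (1 + L * (exp y - 1)) ≤ L * y :=
    log_one_add_mul_exp_sub_one_le hL.le (one_add_mul_exp_sub_one_pos_s14 hL hy)
  refine ⟨daily, fun n Y hY => ?_⟩
  rw [mul_sum]
  exact sum_le_sum fun i _ => daily (Y i) (hY i)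
end
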